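/- arXiv:1809.08253 — 5 statements merged into one kernel-verified Lean document; each statement's English description precedes it below -/
import Mathlib

section
/- If G is a subgroup of the group of germs of holomorphic diffeomorphisms of (ℂ,0) generated by f₁,…,f_{ν+1} with f₁∘⋯∘f_{ν+1} = id and all fᵢ pairwise conjugate in G, and G is abelian, then G is a finite cyclic group generated by f₁, and f₁^{ν+1} = id. -/
open Filter Topology

namespace Paper

variable (𝕜 : Type) [NontriviallyNormedField 𝕜]

/-- Representatives of germs at `0` of analytic maps fixing `0`. -/
def A : Type := {f : 𝕜 → 𝕜 // AnalyticAt 𝕜 f 0 ∧ f 0 = 0}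

instance germSetoid : Setoid (A 𝕜) where
  r f g := f.1 =ᶠ[nhds (0 : 𝕜)] g.1
  iseqv := ⟨fun _ => Filter.EventuallyEq.rfl, Filter.EventuallyEq.symm,
    Filter.EventuallyEq.trans⟩

/-- Germs at `0` of analytic maps fixing `0`; a monoid under composition. -/
def M : Type := Quotient (germSetoid 𝕜)

variable {𝕜}

/-- Composition of representatives. -/
def compA (f g : A 𝕜) : A 𝕜 :=
  ⟨f.1 ∘ g.1, by
    constructor
    · exact AnalyticAt.comp (by rw [g.2.2]; exact f.2.1) g.2.1
    · simp [Function.comp_apply, g.2.2, f.2.2]⟩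

theorem compA_wd (f₁ f₂ g₁ g₂ : A 𝕜) (hf : f₁ ≈ f₂) (hg : g₁ ≈ g₂) :
    compA f₁ g₁ ≈ compA f₂ g₂ := by
  have hg0 : Filter.Tendsto g₁.1 (nhds 0) (nhds (0 : 𝕜)) := by
    have h := g₁.2.1.continuousAt
    rwa [ContinuousAt, g₁.2.2] at h
  exact (Filter.EventuallyEq.comp_tendsto hf hg0).trans (Filter.EventuallyEq.fun_comp hg f₂.1)

instance : Monoid (M 𝕜) where
  mul := Quotient.map₂ compA (fun _ _ hf _ _ hg => compA_wd _ _ _ _ hf hg)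
  one := Quotient.mk _ ⟨id, analyticAt_id, rfl⟩
  mul_assoc a b c := by
    induction a using Quotient.inductionOn with | _ f =>
    induction b using Quotient.inductionOn with | _ g =>
    induction c using Quotient.inductionOn with | _ h =>
    exact Quotient.sound (Filter.EventuallyEq.rfl)
  one_mul a := by
    induction a using Quotient.inductionOn with | _ f =>
    exact Quotient.sound (Filter.EventuallyEq.rfl)
  mul_one a := by
    induction a using Quotient.inductionOn with | _ f =>
    exact Quotient.sound (Filter.EventuallyEq.rfl)

/-- The group `Diff(𝕜,0)` of germs of analytic diffeomorphisms fixing `0`,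
realized as the units of the composition monoid of analytic germs fixing `0`. -/
abbrev Diff (𝕜 : Type) [NontriviallyNormedField 𝕜] : Type := (M 𝕜)ˣ

/-- The multiplier `f'(0)` of a germ. -/
noncomputable def multiplier : M 𝕜 → 𝕜 :=
  Quotient.lift (fun f => deriv f.1 0) (fun _ _ h => Filter.EventuallyEq.deriv_eq h)

theorem iteratedDeriv_wd (n : ℕ) (f g : 𝕜 → 𝕜) (h : f =ᶠ[nhds (0 : 𝕜)] g) :
    iteratedDeriv n f 0 = iteratedDeriv n g 0 := by
  induction n generalizing f g with
  | zero => simpa using h.eq_of_nhds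
  | succ n ih =>
      rw [iteratedDeriv_succ', iteratedDeriv_succ']
      exact ih _ _ h.deriv

/-- The `n`-th derivative at `0` of a germ. -/
noncomputable def dAt (n : ℕ) : M 𝕜 → 𝕜 :=
  Quotient.lift (fun f => iteratedDeriv n f.1 0) (fun _ _ h => iteratedDeriv_wd n _ _ h)

end Paper


open Paper

/-!
In an abelian group conjugate elements coincide, so all generators equal `f₁`; then `G` is
generated by `f₁` alone and the relation `f₁ ∘ ⋯ ∘ f_{ν+1} = id` reads `f₁^{ν+1} = id`.
-/

theorem eq_of_mul_eq_mul_of_commute {G : Type*} [Group G] {a b g : G} (hconj : a * g = g * b)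
    (hcomm : Commute a g) : a = b :=
  mul_left_cancel (hcomm.eq.symm.trans hconj)

theorem eq_of_forall_conj_of_forall_commute {G ι : Type*} [Group G] (f : ι → G) (H : Subgroup G)
    (hmem : ∀ i, f i ∈ H) (hconj : ∀ i j, ∃ g ∈ H, f i * g = g * f j)
    (habel : ∀ a ∈ H, ∀ b ∈ H, a * b = b * a) (i j : ι) : f i = f j := by
  obtain ⟨g, hgH, hg⟩ := hconj i j
  exact eq_of_mul_eq_mul_of_commute hg (habel _ (hmem i) _ hgH)

/-- If `G ⊆ Diff(ℂ,0)` is generated by `f₁,…,f_{ν+1}` with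
`f₁∘⋯∘f_{ν+1} = id`, all `fᵢ` pairwise conjugate in `G`, and `G` abelian, then
`G` is the finite cyclic group generated by `f₁` and `f₁^{ν+1} = id`. -/
theorem stmt0 (ν : ℕ) (f : Fin (ν + 1) → Diff ℂ) (G : Subgroup (Diff ℂ))
    (hG : G = Subgroup.closure (Set.range f))
    (hcomp : (List.ofFn f).prod = 1)
    (hconj : ∀ i j, ∃ g ∈ G, f i * g = g * f j)
    (habel : ∀ a ∈ G, ∀ b ∈ G, a * b = b * a) :
    G = Subgroup.zpowers (f 0) ∧ f 0 ^ (ν + 1) = 1 ∧ (G : Set (Diff ℂ)).Finite := by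
  have hmem (i) : f i ∈ G := hG ▸ Subgroup.subset_closure ⟨i, rfl⟩
  have hf : f = fun _ => f 0 :=
    funext fun i => eq_of_forall_conj_of_forall_commute f G hmem hconj habel i 0
  have hGz : G = Subgroup.zpowers (f 0) := by
    rw [hG, hf, Set.range_const, Subgroup.zpowers_eq_closure]
  have hpow : f 0 ^ (ν + 1) = 1 := by
    rwa [hf, List.ofFn_const, List.prod_replicate] at hcomp
  refine ⟨hGz, hpow, ?_⟩
  rw [hGz]
  exact (isOfFinOrder_iff_pow_eq_one.2 ⟨ν + 1, ν.succ_pos, hpow⟩).finite_zpowers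
end

section
/- Let G ⊂ Diff(ℂ,0) be an irreducible group with basic generators f₁,…,f_{ν+1} (i.e. f₁∘⋯∘f_{ν+1} = id and the fᵢ are pairwise conjugate in G). If some basic generator is tangent to the identity (has multiplier 1), then every basic generator equals the identity, so G is the trivial group. -/
open Filter Topology

open Paper

/-!
The multiplier `f ↦ f'(0)` is a homomorphism to the abelian group `ℂˣ`, so conjugate generators
have the same multiplier; hence all generators, and then all of `G`, are tangent to the identity.
Now induct on `n ≥ 2`. If every generator is `z + O(zⁿ)`, then in Faà di Bruno's formula for the
`n`-th Taylor coefficient of `x ∘ g` or `g ∘ x` (with `x` a generator and `g ∈ G`) only the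
compositions `(n)` and `(1, …, 1)` survive, so this coefficient is additive there. It is therefore
the same number `a` for all generators, and `f₁ ∘ ⋯ ∘ f_{ν+1} = id` gives `(ν + 1) a = 0`.
So every generator has the Taylor series of the identity.
-/

namespace FormalMultilinearSeries

variable {𝕜 : Type*} [NontriviallyNormedField 𝕜] (q p : FormalMultilinearSeries 𝕜 𝕜 𝕜)

theorem coeff_comp (n : ℕ) :
    (q.comp p).coeff n =
      ∑ c : Composition n, (∏ i, p.coeff (c.blocksFun i)) * q.coeff c.length := by
  change (∑ c : Composition n, q.compAlongComposition p c) (fun _ => 1) = _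
  rw [sum_apply]
  refine Finset.sum_congr rfl fun c _ => ?_
  rw [compAlongComposition_apply, apply_eq_prod_smul_coeff, smul_eq_mul]
  rfl

theorem coeff_comp_eq_of_forall_ne {n : ℕ} (hn : 2 ≤ n)
    (hvanish : ∀ c : Composition n, c ≠ Composition.single n (by omega) →
      c ≠ Composition.ones n → (∏ i, p.coeff (c.blocksFun i)) * q.coeff c.length = 0) :
    (q.comp p).coeff n = p.coeff n * q.coeff 1 + p.coeff 1 ^ n * q.coeff n := by
  classical
  have hpos : 0 < n := by omega
  have hne : Composition.single n hpos ≠ Composition.ones n := fun h => by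
    have := congrArg Composition.length h
    rw [Composition.single_length, Composition.ones_length] at this
    omega
  rw [coeff_comp,
    ← Finset.sum_subset (Finset.subset_univ {Composition.single n hpos, Composition.ones n})
    fun c _ hc => hvanish c (fun h => hc (by simp [h])) (fun h => hc (by simp [h])),
    Finset.sum_pair hne]
  congr 1
  · rw [Finset.prod_congr rfl fun i _ => congrArg p.coeff (Composition.single_blocksFun hpos i),
      Finset.prod_const, Finset.card_fin, Composition.single_length, pow_one]
  · simp [Composition.ones_blocksFun]

theorem coeff_comp_of_coeff_left_eq_zero {n : ℕ} (hn : 2 ≤ n)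
    (hq : ∀ m, 2 ≤ m → m < n → q.coeff m = 0) :
    (q.comp p).coeff n = p.coeff n * q.coeff 1 + p.coeff 1 ^ n * q.coeff n := by
  refine coeff_comp_eq_of_forall_ne q p hn fun c hsingle hones => ?_
  have hlength₁ : c.length ≠ 1 := fun h => hsingle ((Composition.eq_single_iff_length _).2 h)
  have hlength : c.length ≠ n := fun h => hones (Composition.eq_ones_iff_length.2 h)
  have hpos := c.length_pos_of_pos (by omega : 0 < n)
  rw [hq c.length (by omega) (lt_of_le_of_ne c.length_le hlength), mul_zero]

theorem coeff_comp_of_coeff_right_eq_zero {n : ℕ} (hn : 2 ≤ n)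
    (hp : ∀ m, 2 ≤ m → m < n → p.coeff m = 0) :
    (q.comp p).coeff n = p.coeff n * q.coeff 1 + p.coeff 1 ^ n * q.coeff n := by
  refine coeff_comp_eq_of_forall_ne q p hn fun c hsingle hones => ?_
  obtain ⟨b, hb, hb₁⟩ := Composition.ne_ones_iff.1 hones
  obtain ⟨i, rfl⟩ := List.get_of_mem hb
  have hlt := (Composition.ne_single_iff (by omega)).1 hsingle i
  rw [Finset.prod_eq_zero (Finset.mem_univ i) (hp _ hb₁ hlt), zero_mul]

end FormalMultilinearSeries

theorem HasFPowerSeriesAt.coeff_eq_iteratedDeriv_div {𝕜 : Type*} [NontriviallyNormedField 𝕜]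
    [CompleteSpace 𝕜] [CharZero 𝕜] {f : 𝕜 → 𝕜} {p : FormalMultilinearSeries 𝕜 𝕜 𝕜} {x : 𝕜}
    (h : HasFPowerSeriesAt f p x) (n : ℕ) :
    p.coeff n = iteratedDeriv n f x / n.factorial := by
  obtain ⟨r, hr⟩ := h
  rw [iteratedDeriv_eq_iteratedFDeriv, ← hr.factorial_smul, nsmul_eq_mul,
    mul_div_cancel_left₀ _ (Nat.cast_ne_zero.2 n.factorial_ne_zero)]
  rfl

namespace Paper

section

variable {𝕜 : Type} [NontriviallyNormedField 𝕜]

noncomputable def multiplierHom : M 𝕜 →* 𝕜 where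
  toFun := multiplier
  map_one' := by
    change deriv id (0 : 𝕜) = 1
    simp
  map_mul' x y := by
    induction x using Quotient.inductionOn with | _ f =>
    induction y using Quotient.inductionOn with | _ g =>
    change deriv (f.1 ∘ g.1) 0 = deriv f.1 0 * deriv g.1 0
    rw [deriv_comp 0 (by rw [g.2.2]; exact f.2.1.differentiableAt) g.2.1.differentiableAt, g.2.2,
      mul_comm]

@[simp] theorem multiplierHom_apply (x : M 𝕜) : multiplierHom x = multiplier x := rfl

theorem multiplier_val_eq_of_semiconjBy {g x y : Diff 𝕜} (h : SemiconjBy g x y) :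
    multiplier x.val = multiplier y.val :=
  congrArg Units.val (semiconjBy_iff_eq.1 (h.map (Units.map (multiplierHom (𝕜 := 𝕜)))))

noncomputable def taylorCoeff (n : ℕ) (x : M 𝕜) : 𝕜 := dAt n x / n.factorial

theorem taylorCoeff_zero (x : M 𝕜) : taylorCoeff 0 x = 0 := by
  induction x using Quotient.inductionOn with | _ f =>
  simp [taylorCoeff, dAt, f.2.2]

theorem taylorCoeff_one (x : M 𝕜) : taylorCoeff 1 x = multiplier x := by
  induction x using Quotient.inductionOn with | _ f =>
  simp [taylorCoeff, dAt, multiplier]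

theorem taylorCoeff_one_right {n : ℕ} (hn : 2 ≤ n) : taylorCoeff n (1 : M 𝕜) = 0 := by
  change iteratedDeriv n id (0 : 𝕜) / n.factorial = 0
  rw [iteratedDeriv_id, if_neg (by omega), if_neg (by omega), zero_div]

end

section

variable {𝕜 : Type} [NontriviallyNormedField 𝕜] [CompleteSpace 𝕜] [CharZero 𝕜]

theorem eq_of_dAt_eq {x y : M 𝕜} (h : ∀ n, dAt n x = dAt n y) : x = y := by
  induction x using Quotient.inductionOn with | _ f =>
  induction y using Quotient.inductionOn with | _ g =>
  refine Quotient.sound ?_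
  have hsub : AnalyticAt 𝕜 (f.1 - g.1) 0 := f.2.1.sub g.2.1
  have htop : analyticOrderAt (f.1 - g.1) 0 = ⊤ :=
    ENat.eq_top_iff_forall_ge.2 fun n =>
      (natCast_le_analyticOrderAt_iff_iteratedDeriv_eq_zero hsub).2 fun i _ => by
        rw [iteratedDeriv_sub f.2.1.contDiffAt g.2.1.contDiffAt, sub_eq_zero]
        exact h i
  filter_upwards [analyticOrderAt_eq_top.1 htop] with z hz
  exact sub_eq_zero.1 hz

theorem eq_of_taylorCoeff_eq {x y : M 𝕜} (h : ∀ n, taylorCoeff n x = taylorCoeff n y) :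
    x = y :=
  eq_of_dAt_eq fun n => by
    simpa [taylorCoeff, Nat.factorial_ne_zero] using h n

theorem exists_coeff_comp_eq_taylorCoeff_mul (x y : M 𝕜) :
    ∃ p q : FormalMultilinearSeries 𝕜 𝕜 𝕜, (∀ n, p.coeff n = taylorCoeff n x) ∧
      (∀ n, q.coeff n = taylorCoeff n y) ∧ ∀ n, (p.comp q).coeff n = taylorCoeff n (x * y) := by
  induction x using Quotient.inductionOn with | _ f =>
  induction y using Quotient.inductionOn with | _ g =>
  obtain ⟨p, hp⟩ := f.2.1
  obtain ⟨q, hq⟩ := g.2.1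
  have hpq : HasFPowerSeriesAt (f.1 ∘ g.1) (p.comp q) 0 :=
    (by rw [g.2.2]; exact hp : HasFPowerSeriesAt f.1 p (g.1 0)).comp hq
  exact ⟨p, q, hp.coeff_eq_iteratedDeriv_div, hq.coeff_eq_iteratedDeriv_div,
    hpq.coeff_eq_iteratedDeriv_div⟩

theorem taylorCoeff_mul_of_left {n : ℕ} (hn : 2 ≤ n) {x : M 𝕜} (y : M 𝕜)
    (hx : ∀ m, 2 ≤ m → m < n → taylorCoeff m x = 0) :
    taylorCoeff n (x * y) =
      taylorCoeff n y * multiplier x + multiplier y ^ n * taylorCoeff n x := by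
  obtain ⟨p, q, hp, hq, hpq⟩ := exists_coeff_comp_eq_taylorCoeff_mul x y
  rw [← hpq, p.coeff_comp_of_coeff_left_eq_zero q hn fun m h₂ hm => (hp m).trans (hx m h₂ hm),
    hp, hq, hp, hq, taylorCoeff_one, taylorCoeff_one]

theorem taylorCoeff_mul_of_right {n : ℕ} (hn : 2 ≤ n) (x : M 𝕜) {y : M 𝕜}
    (hy : ∀ m, 2 ≤ m → m < n → taylorCoeff m y = 0) :
    taylorCoeff n (x * y) =
      taylorCoeff n y * multiplier x + multiplier y ^ n * taylorCoeff n x := by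
  obtain ⟨p, q, hp, hq, hpq⟩ := exists_coeff_comp_eq_taylorCoeff_mul x y
  rw [← hpq, p.coeff_comp_of_coeff_right_eq_zero q hn fun m h₂ hm => (hq m).trans (hy m h₂ hm),
    hp, hq, hp, hq, taylorCoeff_one, taylorCoeff_one]

theorem taylorCoeff_eq_of_semiconjBy {n : ℕ} (hn : 2 ≤ n) {g x y : M 𝕜} (h : SemiconjBy g x y)
    (hg : multiplier g = 1) (hx : multiplier x = 1) (hy : multiplier y = 1)
    (hx' : ∀ m, 2 ≤ m → m < n → taylorCoeff m x = 0)
    (hy' : ∀ m, 2 ≤ m → m < n → taylorCoeff m y = 0) :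
    taylorCoeff n x = taylorCoeff n y := by
  have h := congrArg (taylorCoeff n) h
  rw [taylorCoeff_mul_of_right hn g hx', taylorCoeff_mul_of_left hn g hy', hg, hx, hy] at h
  linear_combination h

theorem taylorCoeff_list_prod {n : ℕ} (hn : 2 ≤ n) {l : List (M 𝕜)}
    (hmult : ∀ x ∈ l, multiplier x = 1)
    (hl : ∀ x ∈ l, ∀ m, 2 ≤ m → m < n → taylorCoeff m x = 0) :
    taylorCoeff n l.prod = (l.map (taylorCoeff n)).sum := by
  induction l with
  | nil => simp [taylorCoeff_one_right hn]
  | cons x l ih =>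
    obtain ⟨hx, hmult⟩ := List.forall_mem_cons.1 hmult
    obtain ⟨hx', hl⟩ := List.forall_mem_cons.1 hl
    have hprod : multiplier l.prod = 1 := by
      rw [← multiplierHom_apply, map_list_prod]
      exact List.prod_eq_one (by simpa using hmult)
    rw [List.prod_cons, taylorCoeff_mul_of_left hn _ hx', ih hmult hl, hx, hprod, List.map_cons,
      List.sum_cons]
    ring

theorem eq_one_of_list_prod_eq_one {l : List (M 𝕜)} (hprod : l.prod = 1)
    (hmult : ∀ x ∈ l, multiplier x = 1)
    (hconj : ∀ x ∈ l, ∀ y ∈ l, ∃ g, multiplier g = 1 ∧ SemiconjBy g x y) :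
    ∀ x ∈ l, x = 1 := by
  suffices h : ∀ n, 2 ≤ n → ∀ x ∈ l, taylorCoeff n x = 0 by
    intro x hx
    refine eq_of_taylorCoeff_eq fun n => ?_
    match n with
    | 0 => rw [taylorCoeff_zero, taylorCoeff_zero]
    | 1 => rw [taylorCoeff_one, taylorCoeff_one, hmult x hx, ← multiplierHom_apply, map_one]
    | n + 2 => rw [h _ (by omega) x hx, taylorCoeff_one_right (by omega)]
  intro n
  induction n using Nat.strong_induction_on with | _ n ih =>
  intro hn x hx
  have hlow : ∀ y ∈ l, ∀ m, 2 ≤ m → m < n → taylorCoeff m y = 0 :=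
    fun y hy m hm hmn => ih m hmn hm y hy
  have hconst : ∀ a ∈ l.map (taylorCoeff n), a = taylorCoeff n x := by
    intro a ha
    obtain ⟨y, hy, rfl⟩ := List.mem_map.1 ha
    obtain ⟨g, hg, hgyx⟩ := hconj y hy x hx
    exact taylorCoeff_eq_of_semiconjBy hn hgyx hg (hmult y hy) (hmult x hx) (hlow y hy) (hlow x hx)
  have hsum : l.length • taylorCoeff n x = 0 := by
    rw [← List.length_map (taylorCoeff n), ← List.sum_eq_card_nsmul _ _ hconst,
      ← taylorCoeff_list_prod hn hmult hlow, hprod, taylorCoeff_one_right hn]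
  exact (smul_eq_zero.1 hsum).resolve_left (List.length_pos_of_mem hx).ne'

theorem eq_one_of_list_ofFn_prod_eq_one {k : ℕ} (f : Fin k → Diff 𝕜)
    (hprod : (List.ofFn f).prod = 1) (hmult : ∀ i, multiplier (f i).val = 1)
    (hconj : ∀ i j, ∃ g : Diff 𝕜, multiplier g.val = 1 ∧ SemiconjBy g (f i) (f j)) :
    ∀ i, f i = 1 := by
  have hprod' : (List.ofFn fun i => (f i).val).prod = 1 := by
    have h := map_list_prod (Units.coeHom (M 𝕜)) (List.ofFn f)
    rw [hprod, map_one, List.map_ofFn] at h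
    exact h.symm
  have h := eq_one_of_list_prod_eq_one hprod'
    (fun x hx => by obtain ⟨i, rfl⟩ := List.mem_ofFn.1 hx; exact hmult i)
    (fun x hx y hy => by
      obtain ⟨i, rfl⟩ := List.mem_ofFn.1 hx
      obtain ⟨j, rfl⟩ := List.mem_ofFn.1 hy
      obtain ⟨g, hg, hgij⟩ := hconj i j
      exact ⟨g.val, hg, hgij.units_val⟩)
  exact fun i => Units.ext (h _ (List.mem_ofFn.2 ⟨i, rfl⟩))

end

end Paper

/-- An irreducible subgroup of `Diff(ℂ,0)` with a basic generator
tangent to the identity is trivial: every basic generator is the identity. -/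
theorem stmt2 (ν : ℕ) (f : Fin (ν + 1) → Diff ℂ) (G : Subgroup (Diff ℂ))
    (hG : G = Subgroup.closure (Set.range f))
    (hcomp : (List.ofFn f).prod = 1)
    (hconj : ∀ i j, ∃ g ∈ G, f i * g = g * f j)
    (htang : ∃ i, multiplier (f i).val = 1) :
    (∀ i, f i = 1) ∧ G = ⊥ := by
  have hmult : ∀ i, multiplier (f i).val = 1 := by
    obtain ⟨i₀, hi₀⟩ := htang
    intro i
    obtain ⟨g, -, hg⟩ := hconj i i₀
    rw [← multiplier_val_eq_of_semiconjBy hg.symm, hi₀]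
  have hGmult : G ≤ (multiplierHom.comp (Units.coeHom (M ℂ))).ker := by
    rw [hG, Subgroup.closure_le]
    rintro _ ⟨i, rfl⟩
    exact hmult i
  have hf : ∀ i, f i = 1 := eq_one_of_list_ofFn_prod_eq_one f hcomp hmult fun i j => by
    obtain ⟨g, hg, hji⟩ := hconj j i
    exact ⟨g, hGmult hg, hji.symm⟩
  exact ⟨hf, by rw [hG, Subgroup.closure_eq_bot_iff]; rintro _ ⟨i, rfl⟩; exact hf i⟩
end

section
/- Let η be a primitive l-th root of unity with l > 1, let β₁,…,β_{r+1} ∈ ℂ, and let Γ ⊂ Aff(ℂ) be the group generated by hᵢ(z) = ηz + βᵢ, i = 1,…,r+1. Then the hᵢ are pairwise conjugate in Γ if and only if either l has at least two distinct prime divisors, or l = q^m for a prime q and m ≥ 1 and β₁ = β₂ = ⋯ = β_{r+1}. -/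
/-!
Let `R = ℤ[η]` and let `M ⊆ ℂ` be the `R`-module spanned by the differences `βᵢ - βⱼ`.
Since `Γ` contains `hᵢ hⱼ⁻¹` (translation by `βᵢ - βⱼ`) and conjugation by `hⱼ` multiplies
translation vectors by `η`, every translation by an element of `M` lies in `Γ`; and `Γ` preserves
the coset `c + M` for any fixed point `c` of an `hⱼ`. A `g` conjugating `hⱼ` to `hᵢ` carries the
fixed point of `hⱼ` to that of `hᵢ`, which forces `βᵢ - βⱼ ∈ (η - 1) M`; conversely translation by
`m` with `(η - 1) m = βⱼ - βᵢ` conjugates `hⱼ` to `hᵢ`. Hence the `hᵢ` are pairwise conjugate iff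
`M ⊆ (η - 1) M`, which by Nakayama means `M = 0` or `η - 1 ∈ Rˣ`. Finally `η - 1` divides every
prime `p ∣ l` in `R`, so it is a unit when two distinct primes divide `l`; if `l = q ^ m`, then
`(η - 1) ^ l ∈ q R`, and `q` is not a unit in the integral extension `R` of `ℤ`.
-/

open scoped Algebra

theorem Nat.exists_ne_primes_dvd_iff_not_isPrimePow {n : ℕ} (hn : n ≠ 1) :
    (∃ p q, p.Prime ∧ q.Prime ∧ p ≠ q ∧ p ∣ n ∧ q ∣ n) ↔ ¬IsPrimePow n := by
  rw [isPrimePow_iff_unique_prime_dvd]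
  constructor
  · rintro ⟨p, q, hp, hq, hne, hpn, hqn⟩ ⟨r, -, huniq⟩
    exact hne ((huniq p ⟨hp, hpn⟩).trans (huniq q ⟨hq, hqn⟩).symm)
  · intro hnot
    obtain ⟨p, hp, hpn⟩ := Nat.exists_prime_and_dvd hn
    by_contra! hall
    exact hnot ⟨p, ⟨hp, hpn⟩, fun q ⟨hq, hqn⟩ => by_contra fun hne => hall q p hq hp hne hqn hpn⟩

theorem Nat.exists_prime_pow_eq_iff_isPrimePow {n : ℕ} :
    (∃ q m, q.Prime ∧ 1 ≤ m ∧ n = q ^ m) ↔ IsPrimePow n := by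
  simp only [isPrimePow_nat_iff, Nat.one_le_iff_ne_zero, Nat.pos_iff_ne_zero, eq_comm (a := n)]

namespace IsPrimitiveRoot

variable {A : Type*} [CommRing A] [IsDomain A] {ζ : A} {l : ℕ}

theorem sub_one_dvd_of_prime_dvd (hζ : IsPrimitiveRoot ζ l) (hl : 0 < l) {p : ℕ} (hp : p.Prime)
    (hpl : p ∣ l) : ζ - 1 ∣ (p : A) := by
  obtain ⟨d, rfl⟩ := hpl
  have hξ : IsPrimitiveRoot (ζ ^ d) p := hζ.pow hl (mul_comm _ _)
  have hp_eq : (p : A) = -∑ t ∈ Finset.range p, ((ζ ^ d) ^ t - 1) := by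
    simp [Finset.sum_sub_distrib, hξ.geom_sum_eq_zero hp.one_lt]
  rw [hp_eq]
  exact (Finset.dvd_sum fun t _ => by rw [← pow_mul]; exact sub_one_dvd_pow_sub_one ζ _).neg_right

theorem isUnit_sub_one_of_not_isPrimePow (hζ : IsPrimitiveRoot ζ l) (hl : 1 < l)
    (hpp : ¬IsPrimePow l) : IsUnit (ζ - 1) := by
  obtain ⟨p, q, hp, hq, hne, hpl, hql⟩ :=
    (Nat.exists_ne_primes_dvd_iff_not_isPrimePow hl.ne').2 hpp
  have hcop : IsCoprime (p : A) q := ((Nat.coprime_primes hp hq).2 hne).cast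
  exact hcop.isUnit_of_dvd'
    (hζ.sub_one_dvd_of_prime_dvd (by omega) hp hpl) (hζ.sub_one_dvd_of_prime_dvd (by omega) hq hql)

end IsPrimitiveRoot

/-- Expanding `((ζ - 1) + 1) ^ q ^ m` gives `(ζ - 1) ^ q ^ m ∈ q (ζ - 1) A`. -/
theorem not_isUnit_sub_one_of_pow_prime_pow_eq_one {A : Type*} [CommRing A] {ζ : A} {q m : ℕ}
    (hq : q.Prime) (hζ : ζ ^ q ^ m = 1) (hqA : ¬IsUnit (q : A)) : ¬IsUnit (ζ - 1) := by
  intro hunit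
  obtain ⟨r, hr⟩ := exists_add_pow_prime_pow_eq hq (ζ - 1) 1 m
  rw [sub_add_cancel, hζ, one_pow] at hr
  have hpow : (ζ - 1) ^ q ^ m = (q : A) * (-((ζ - 1) * r)) := by linear_combination -hr
  exact hqA (isUnit_of_mul_isUnit_left (hpow ▸ hunit.pow _))

theorem Subalgebra.not_isUnit_natCast {K : Type*} [Field K] [CharZero K] (S : Subalgebra ℤ K)
    [Algebra.IsIntegral ℤ S] {n : ℕ} (hn : n ≠ 1) : ¬IsUnit (n : S) := by
  rintro ⟨u, hu⟩
  obtain rfl | hn0 := eq_or_ne n 0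
  · simp at hu
  have hinv : ((u⁻¹ : Sˣ) : K) = algebraMap ℚ K (n : ℚ)⁻¹ := by
    rw [map_inv₀, map_natCast, ← mul_eq_one_iff_eq_inv₀ (Nat.cast_ne_zero.2 hn0)]
    exact_mod_cast congrArg Subtype.val (hu ▸ u.inv_mul)
  have hint : IsIntegral ℤ (algebraMap ℚ K (n : ℚ)⁻¹) :=
    hinv ▸ (Algebra.IsIntegral.isIntegral (R := ℤ) (u⁻¹ : Sˣ).1).map S.val
  obtain ⟨z, hz⟩ := IsIntegrallyClosed.isIntegral_iff.1
    ((isIntegral_algebraMap_iff (algebraMap ℚ K).injective).1 hint)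
  have hzn : z * n = 1 := by
    have : (z : ℚ) * n = 1 := by
      rw [show (z : ℚ) = _ from hz, inv_mul_cancel₀ (by exact_mod_cast hn0)]
    exact_mod_cast this
  exact hn (Nat.dvd_one.1 (Int.natCast_dvd_natCast.1 (Dvd.intro_left z hzn)))

theorem Submodule.eq_bot_of_le_span_singleton_smul {R V : Type*} [CommRing R] [IsDomain R]
    [AddCommGroup V] [Module R V] [Module.IsTorsionFree R V] {a : R} (ha : ¬IsUnit a)
    {N : Submodule R V} (hN : N.FG) (hle : N ≤ Ideal.span {a} • N) : N = ⊥ := by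
  obtain ⟨r, hr, hrN⟩ := Submodule.exists_sub_one_mem_and_smul_eq_zero_of_fg_of_le_smul _ N hN hle
  have hr0 : r ≠ 0 := by
    rintro rfl
    obtain ⟨b, hb⟩ := Ideal.mem_span_singleton'.1 hr
    exact ha (.of_mul_eq_one (-b) (by linear_combination -hb))
  exact (Submodule.eq_bot_iff N).2 fun x hx => (smul_eq_zero_iff_right hr0).1 (hrN x hx)

namespace AffineEquiv

variable {k V P : Type*} [Ring k] [AddCommGroup V] [Module k V] [AddTorsor V P]

theorem conj_constVAdd (f : P ≃ᵃ[k] P) (v : V) :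
    f * constVAdd k P v * f⁻¹ = constVAdd k P (f.linear v) := by
  ext p
  simp [mul_def, inv_def, map_vadd]

def translations (Γ : Subgroup (P ≃ᵃ[k] P)) : AddSubgroup V where
  carrier := {v | constVAdd k P v ∈ Γ}
  zero_mem' := by simp [← one_def]
  add_mem' {v w} hv hw := by simpa [constVAdd_add, ← mul_def] using Γ.mul_mem hv hw
  neg_mem' {v} hv := by simpa [← constVAdd_symm, ← inv_def] using Γ.inv_mem hv

theorem mem_translations {Γ : Subgroup (P ≃ᵃ[k] P)} {v : V} :
    v ∈ translations Γ ↔ constVAdd k P v ∈ Γ := Iff.rfl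

theorem linear_mem_translations {Γ : Subgroup (P ≃ᵃ[k] P)} {f : P ≃ᵃ[k] P} (hf : f ∈ Γ)
    {v : V} (hv : v ∈ translations Γ) : f.linear v ∈ translations Γ := by
  rw [mem_translations, ← conj_constVAdd]
  exact Γ.mul_mem (Γ.mul_mem hf hv) (Γ.inv_mem hf)

end AffineEquiv

theorem AddSubgroup.mul_mem_of_mem_adjoin_singleton {A : Type*} [CommRing A] {η : A}
    {S : AddSubgroup A} (hS : ∀ x ∈ S, η * x ∈ S) {c : A} (hc : c ∈ ℤ[η]) {x : A} (hx : x ∈ S) :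
    c * x ∈ S := by
  induction hc using Algebra.adjoin_induction generalizing x with
  | mem y hy => exact (Set.mem_singleton_iff.1 hy) ▸ hS x hx
  | algebraMap n => simpa [← zsmul_eq_mul] using S.zsmul_mem hx n
  | add u v _ _ hu hv => simpa [add_mul] using S.add_mem (hu hx) (hv hx)
  | mul u v _ _ hu hv => simpa [mul_assoc] using hu (hv hx)

section

variable {K : Type*} [Field K] {ι : Type*}

def adjoinSelf (η : K) : ℤ[η] := ⟨η, Algebra.self_mem_adjoin_singleton ℤ η⟩

theorem IsPrimitiveRoot.adjoinSelf {η : K} {l : ℕ} (hη : IsPrimitiveRoot η l) :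
    IsPrimitiveRoot (adjoinSelf η) l :=
  IsPrimitiveRoot.coe_submonoidClass_iff.1 hη

theorem isUnit_adjoinSelf_sub_one_iff [CharZero K] {η : K} {l : ℕ} (hη : IsPrimitiveRoot η l)
    (hl : 1 < l) : IsUnit (adjoinSelf η - 1) ↔ ¬IsPrimePow l := by
  refine ⟨fun hu hpp => ?_, hη.adjoinSelf.isUnit_sub_one_of_not_isPrimePow hl⟩
  obtain ⟨q, m, hq, -, rfl⟩ := (isPrimePow_nat_iff l).1 hpp
  have : Algebra.IsIntegral ℤ ℤ[η] :=
    Algebra.IsIntegral.adjoin (by simpa using hη.isIntegral (by omega))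
  exact not_isUnit_sub_one_of_pow_prime_pow_eq_one hq hη.adjoinSelf.pow_eq_one
    (Subalgebra.not_isUnit_natCast _ hq.ne_one) hu

def diffSpan (η : K) (β : ι → K) : Submodule ℤ[η] K :=
  Submodule.span ℤ[η] (Set.range fun p : ι × ι => β p.1 - β p.2)

variable {η : K} {β : ι → K}

theorem sub_mem_diffSpan (i j : ι) : β i - β j ∈ diffSpan η β :=
  Submodule.subset_span ⟨(i, j), rfl⟩

theorem diffSpan_eq_bot_iff : diffSpan η β = ⊥ ↔ ∀ i j, β i = β j := by
  simp only [diffSpan, Submodule.span_eq_bot, Set.forall_mem_range, Prod.forall, sub_eq_zero]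

theorem diffSpan_fg [Finite ι] : (diffSpan η β).FG :=
  Submodule.fg_span (Set.finite_range _)

variable {h : ι → K ≃ᵃ[K] K}

theorem linear_apply_eq_mul (hh : ∀ i z, h i z = η * z + β i) (i : ι) (x : K) :
    (h i).linear x = η * x := by
  have hlin := (h i).toAffineMap.linearMap_vsub x 0
  simp only [AffineEquiv.linear_toAffineMap, vsub_eq_sub, sub_zero, LinearEquiv.coe_coe,
    AffineEquiv.coe_toAffineMap, hh, mul_zero, zero_add, add_sub_cancel_right] at hlin
  exact hlin

theorem sub_mem_diffSpan_iff_of_mem_closure (hh : ∀ i z, h i z = η * z + β i)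
    (hη : IsUnit (adjoinSelf η)) {j : ι} {c : K} (hc : h j c = c) {g : K ≃ᵃ[K] K}
    (hg : g ∈ Subgroup.closure (Set.range h)) (x : K) :
    g x - c ∈ diffSpan η β ↔ x - c ∈ diffSpan η β := by
  induction hg using Subgroup.closure_induction generalizing x with
  | mem f hf =>
    obtain ⟨i, rfl⟩ := hf
    have hcj := hh j c
    have hx : h i x - c = adjoinSelf η • (x - c) + (β i - β j) := by
      rw [Subalgebra.smul_def, hh]
      simp only [adjoinSelf]
      linear_combination hc - hcj
    rw [hx, (diffSpan η β).add_mem_iff_left (sub_mem_diffSpan i j),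
      (diffSpan η β).smul_mem_iff_of_isUnit hη]
  | one => rfl
  | mul f g _ _ hf hg => rw [AffineEquiv.coe_mul, Function.comp_apply, hf, hg]
  | inv f _ hf => rw [← hf, AffineEquiv.inv_def, AffineEquiv.apply_symm_apply]

theorem diffSpan_le_smul_of_conj (hh : ∀ i z, h i z = η * z + β i) (hη1 : η ≠ 1)
    (hη : IsUnit (adjoinSelf η))
    (hconj : ∀ i j, ∃ g ∈ Subgroup.closure (Set.range h), ∀ z, h i (g z) = g (h j z)) :
    diffSpan η β ≤ Ideal.span {adjoinSelf η - 1} • diffSpan η β := by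
  refine Submodule.span_le.2 ?_
  rintro _ ⟨⟨i, j⟩, rfl⟩
  obtain ⟨g, hg, hgc⟩ := hconj i j
  obtain ⟨c, hc⟩ : ∃ c, h j c = c := ⟨β j / (1 - η), by
    rw [hh]
    field_simp [sub_ne_zero.2 hη1.symm]
    ring⟩
  have hgc_fixed : h i (g c) = g c := by rw [hgc, hc]
  have hmem : c - g c ∈ diffSpan η β := by
    rw [← neg_sub]
    exact neg_mem ((sub_mem_diffSpan_iff_of_mem_closure hh hη hc hg c).2 (by simp))
  have hdiff : β i - β j = (adjoinSelf η - 1) • (c - g c) := by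
    rw [Subalgebra.smul_def]
    simp only [adjoinSelf, AddSubgroupClass.coe_sub, OneMemClass.coe_one]
    linear_combination hh j c - hc - hh i (g c) + hgc_fixed
  show β i - β j ∈ _
  rw [hdiff]
  exact Submodule.smul_mem_smul (Ideal.mem_span_singleton_self _) hmem

theorem constVAdd_mem_closure [Nonempty ι] (hh : ∀ i z, h i z = η * z + β i) {m : K}
    (hm : m ∈ diffSpan η β) : AffineEquiv.constVAdd K K m ∈ Subgroup.closure (Set.range h) := by
  obtain ⟨i₀⟩ := ‹Nonempty ι›
  have hη : ∀ x ∈ AffineEquiv.translations (Subgroup.closure (Set.range h)),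
      η * x ∈ AffineEquiv.translations (Subgroup.closure (Set.range h)) := fun x hx => by
    rw [← linear_apply_eq_mul hh i₀]
    exact AffineEquiv.linear_mem_translations (Subgroup.subset_closure (Set.mem_range_self i₀)) hx
  rw [← AffineEquiv.mem_translations]
  induction hm using Submodule.span_induction with
  | mem x hx =>
    obtain ⟨⟨i, j⟩, rfl⟩ := hx
    have hij : AffineEquiv.constVAdd K K (β i - β j) = h i * (h j)⁻¹ := by
      ext z
      obtain ⟨w, rfl⟩ := (h j).surjective z
      rw [AffineEquiv.coe_mul, Function.comp_apply, AffineEquiv.inv_def,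
        AffineEquiv.symm_apply_apply, AffineEquiv.constVAdd_apply, vadd_eq_add, hh, hh]
      ring
    rw [AffineEquiv.mem_translations, hij]
    exact mul_mem (Subgroup.subset_closure (Set.mem_range_self i))
      (inv_mem (Subgroup.subset_closure (Set.mem_range_self j)))
  | zero => exact zero_mem _
  | add x y _ _ hx hy => exact add_mem hx hy
  | smul c x _ hx => exact AddSubgroup.mul_mem_of_mem_adjoin_singleton hη c.2 hx

theorem pairwise_conj_iff [Finite ι] (hh : ∀ i z, h i z = η * z + β i) {l : ℕ}
    (hη : IsPrimitiveRoot η l) (hl : 1 < l) :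
    (∀ i j, ∃ g ∈ Subgroup.closure (Set.range h), ∀ z, h i (g z) = g (h j z)) ↔
      IsUnit (adjoinSelf η - 1) ∨ ∀ i j, β i = β j := by
  have hηu : IsUnit (adjoinSelf η) := hη.adjoinSelf.isUnit (by omega)
  constructor
  · intro hconj
    refine or_iff_not_imp_left.2 fun hu => (diffSpan_eq_bot_iff (η := η)).1 ?_
    exact Submodule.eq_bot_of_le_span_singleton_smul hu diffSpan_fg
      (diffSpan_le_smul_of_conj hh (hη.ne_one hl) hηu hconj)
  · rintro (hu | heq) i j
    · have : Nonempty ι := ⟨i⟩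
      obtain ⟨e, he⟩ := hu.exists_right_inv
      have he' : (η - 1) * (e : K) = 1 := by simpa [adjoinSelf] using congrArg Subtype.val he
      refine ⟨_, constVAdd_mem_closure hh
        (Submodule.smul_mem _ e (sub_mem_diffSpan (η := η) j i)), fun z => ?_⟩
      rw [AffineEquiv.constVAdd_apply, AffineEquiv.constVAdd_apply, vadd_eq_add, vadd_eq_add, hh,
        hh, Subalgebra.smul_def]
      linear_combination (β j - β i) * he'
    · exact ⟨1, one_mem _, fun z => by simp [hh, heq i j]⟩

end

/-- Let `η` be a primitive `l`-th root of unity, `l > 1`, and let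
`Γ ⊆ Aff(ℂ)` be generated by `hᵢ(z) = ηz + βᵢ`, `i = 1,…,r+1`.  The `hᵢ` are
pairwise conjugate in `Γ` iff either `l` has two distinct prime divisors, or
`l = q^m` for a prime `q`, `m ≥ 1`, and all `βᵢ` are equal. -/
theorem stmt8 (l : ℕ) (hl : 1 < l) (η : ℂ) (hη : IsPrimitiveRoot η l)
    (r : ℕ) (β : Fin (r + 1) → ℂ) (h : Fin (r + 1) → ℂ ≃ᵃ[ℂ] ℂ)
    (hh : ∀ i, ∀ z : ℂ, h i z = η * z + β i)
    (Γ : Subgroup (ℂ ≃ᵃ[ℂ] ℂ)) (hΓ : Γ = Subgroup.closure (Set.range h)) :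
    (∀ i j, ∃ g ∈ Γ, ∀ z : ℂ, h i (g z) = g (h j z)) ↔
      ((∃ p q : ℕ, p.Prime ∧ q.Prime ∧ p ≠ q ∧ p ∣ l ∧ q ∣ l) ∨
        ((∃ q m : ℕ, q.Prime ∧ 1 ≤ m ∧ l = q ^ m) ∧ ∀ i j, β i = β j)) := by
  subst hΓ
  rw [pairwise_conj_iff hh hη hl, isUnit_adjoinSelf_sub_one_iff hη hl,
    Nat.exists_ne_primes_dvd_iff_not_isPrimePow hl.ne', Nat.exists_prime_pow_eq_iff_isPrimePow]
  tauto
end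

section
/- Let Γ ⊂ Aff(ℂ) be generated by hᵢ(z) = ηz + βᵢ, i = 1,…,r+1, where η is a primitive root of unity of order p^s for a prime p and s ≥ 1. If the hᵢ are pairwise conjugate in Γ, then β₁ = β₂ = ⋯ = β_{r+1}. -/
/-!
Every `h i` has linear part `η`. Centred at the fixed point of `h 0`, every element of `Γ` is
`z ↦ η ^ m * z + δ` with `δ` in the finitely generated `ℤ`-module `Δ` spanned by the
`η ^ k * (β i - β 0)`, which is stable under multiplication by `η`. Comparing translation parts in
`h i ∘ g = g ∘ h 0` gives `β i - β 0 ∈ (η - 1) Δ`, so `(η - 1)⁻¹ Δ ⊆ Δ`. If `Δ ≠ 0`, then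
`(η - 1)⁻¹` is integral over `ℤ`. Reversing its monic equation gives `G ∈ ℤ[X]` with `G(η) = 0` and
`G(1) = 1`. But `Φ_{p^s}` divides `G` and `Φ_{p^s}(1) = p`. Hence `Δ = 0`.
-/

open Polynomial

theorem exists_aeval_eq_zero_eval_one_eq_one_of_isIntegral_inv_sub_one {K : Type*} [Field K]
    {x : K} (hx : x ≠ 1) (h : IsIntegral ℤ (x - 1)⁻¹) :
    ∃ G : ℤ[X], aeval x G = 0 ∧ G.eval 1 = 1 := by
  obtain ⟨f, hf_monic, hf⟩ := h
  let _ : Invertible (x - 1)⁻¹ := invertibleOfNonzero (inv_ne_zero (sub_ne_zero.mpr hx))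
  have hrev : aeval (x - 1) f.reverse = 0 := by
    rw [← eval₂_reverse_eq_zero_iff] at hf
    simpa [aeval_def, invOf_eq_inv] using hf
  refine ⟨f.reverse.comp (X - 1), ?_, ?_⟩
  · simpa [aeval_comp] using hrev
  · simp [eval_comp, ← coeff_zero_eq_eval_zero, coeff_zero_reverse, hf_monic.leadingCoeff]

theorem IsPrimitiveRoot.not_isIntegral_inv_sub_one {K : Type*} [Field K] [CharZero K]
    {p s : ℕ} (hp : p.Prime) (hs : 1 ≤ s) {η : K} (hη : IsPrimitiveRoot η (p ^ s)) :
    ¬ IsIntegral ℤ (η - 1)⁻¹ := by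
  intro h
  have hpos : 0 < p ^ s := pow_pos hp.pos s
  obtain ⟨G, hGη, hG1⟩ := exists_aeval_eq_zero_eval_one_eq_one_of_isIntegral_inv_sub_one
    (hη.ne_one (Nat.one_lt_pow (by omega) hp.one_lt)) h
  obtain ⟨H, hH⟩ : cyclotomic (p ^ s) ℤ ∣ G := by
    rw [cyclotomic_eq_minpoly hη hpos]
    exact minpoly.isIntegrallyClosed_dvd (hη.isIntegral hpos) hGη
  have : Fact p.Prime := ⟨hp⟩
  obtain ⟨s, rfl⟩ := Nat.exists_eq_add_of_le' hs
  have : (p : ℤ) ∣ 1 := ⟨H.eval 1, by simpa [hG1] using congrArg (eval 1) hH⟩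
  exact hp.one_lt.ne' (by exact_mod_cast Int.eq_one_of_dvd_one (by positivity) this)

theorem Submodule.mul_mem_span_of_forall_mul_mem {R A : Type*} [CommSemiring R] [Semiring A]
    [Algebra R A] {s : Set A} {u : A} (hs : ∀ x ∈ s, u * x ∈ span R s) {x : A}
    (hx : x ∈ span R s) : u * x ∈ span R s :=
  (span_le (p := (span R s).comap (LinearMap.mulLeft R u))).mpr hs hx

section RotationTranslation

variable {k : Type*} [Field k] (η c : k) (Δ : Submodule ℤ k)

theorem pow_mul_mem_of_forall_mul_mem (hηΔ : ∀ δ ∈ Δ, η * δ ∈ Δ) (n : ℕ) {δ : k} (hδ : δ ∈ Δ) :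
    η ^ n * δ ∈ Δ := by
  induction n with
  | zero => simpa using hδ
  | succ n ih => simpa [pow_succ', mul_assoc] using hηΔ _ ih

def rotationTranslationSubgroup {q : ℕ} (hq : 0 < q) (hηq : η ^ q = 1)
    (hηΔ : ∀ δ ∈ Δ, η * δ ∈ Δ) : Subgroup (k ≃ᵃ[k] k) where
  carrier := {g | ∃ m : ℕ, ∃ δ ∈ Δ, ∀ z, g z = η ^ m * (z - c) + c + δ}
  one_mem' := ⟨0, 0, Δ.zero_mem, fun z => by simp⟩
  mul_mem' := by
    rintro g g' ⟨m, δ, hδ, hg⟩ ⟨m', δ', hδ', hg'⟩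
    refine ⟨m + m', η ^ m * δ' + δ,
      Δ.add_mem (pow_mul_mem_of_forall_mul_mem η Δ hηΔ m hδ') hδ, fun z => ?_⟩
    rw [AffineEquiv.coe_mul, Function.comp_apply, hg', hg, pow_add]
    ring
  inv_mem' := by
    rintro g ⟨m, δ, hδ, hg⟩
    have hinv : η ^ m * η ^ (m * (q - 1)) = 1 := by
      rw [← pow_add, add_comm, ← mul_add_one, Nat.sub_add_cancel (Nat.one_le_of_lt hq), pow_mul',
        hηq, one_pow]
    refine ⟨m * (q - 1), -(η ^ (m * (q - 1)) * δ),
      Δ.neg_mem (pow_mul_mem_of_forall_mul_mem η Δ hηΔ _ hδ), fun z => ?_⟩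
    rw [AffineEquiv.inv_def, AffineEquiv.symm_apply_eq, hg]
    linear_combination (c + δ - z) * hinv

variable {η c Δ}

theorem mem_rotationTranslationSubgroup {q : ℕ} (hq : 0 < q) (hηq : η ^ q = 1)
    (hηΔ : ∀ δ ∈ Δ, η * δ ∈ Δ) {g : k ≃ᵃ[k] k} {β : k} (hg : ∀ z, g z = η * z + β)
    (hβ : β - (1 - η) * c ∈ Δ) : g ∈ rotationTranslationSubgroup η c Δ hq hηq hηΔ :=
  ⟨1, _, hβ, fun z => by rw [hg]; ring⟩

theorem exists_mem_sub_eq_mul_of_semiconj {q : ℕ} {hq : 0 < q} {hηq : η ^ q = 1}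
    {hηΔ : ∀ δ ∈ Δ, η * δ ∈ Δ} {g : k ≃ᵃ[k] k}
    (hg : g ∈ rotationTranslationSubgroup η c Δ hq hηq hηΔ) {β₁ β₂ : k}
    (hconj : ∀ z, η * g z + β₁ = g (η * z + β₂)) (hβ₂ : β₂ - (1 - η) * c ∈ Δ) :
    ∃ w ∈ Δ, β₁ - β₂ = (η - 1) * w := by
  obtain ⟨m, δ, hδ, hg⟩ := hg
  have hc := hconj c
  rw [hg, hg] at hc
  refine ⟨(∑ i ∈ Finset.range m, η ^ i) * (β₂ - (1 - η) * c) - δ,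
    Δ.sub_mem ?_ hδ, ?_⟩
  · rw [Finset.sum_mul]
    exact Δ.sum_mem fun i _ => pow_mul_mem_of_forall_mul_mem η Δ hηΔ i hβ₂
  · linear_combination hc - (β₂ - (1 - η) * c) * geom_sum_mul η m

end RotationTranslation

/-- If `Γ ⊆ Aff(ℂ)` is generated by `hᵢ(z) = ηz + βᵢ` with `η` a
primitive root of unity of order `p^s` (`p` prime, `s ≥ 1`) and the `hᵢ` are
pairwise conjugate in `Γ`, then all `βᵢ` are equal. -/
theorem stmt9 (p : ℕ) (hp : p.Prime) (s : ℕ) (hs : 1 ≤ s)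
    (η : ℂ) (hη : IsPrimitiveRoot η (p ^ s))
    (r : ℕ) (β : Fin (r + 1) → ℂ) (h : Fin (r + 1) → ℂ ≃ᵃ[ℂ] ℂ)
    (hh : ∀ i, ∀ z : ℂ, h i z = η * z + β i)
    (Γ : Subgroup (ℂ ≃ᵃ[ℂ] ℂ)) (hΓ : Γ = Subgroup.closure (Set.range h))
    (hconj : ∀ i j, ∃ g ∈ Γ, ∀ z : ℂ, h i (g z) = g (h j z)) :
    ∀ i j, β i = β j := by
  have hq : 0 < p ^ s := pow_pos hp.pos s
  have hη1 : η ≠ 1 := hη.ne_one (Nat.one_lt_pow (by omega) hp.one_lt)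
  set Δ := Submodule.span ℤ
    (Set.range fun t : Fin (p ^ s) × Fin (r + 1) => η ^ (t.1 : ℕ) * (β t.2 - β 0))
  have hgen (n : ℕ) (i : Fin (r + 1)) : η ^ n * (β i - β 0) ∈ Δ := by
    rw [← Nat.mod_add_div n (p ^ s), pow_add, pow_mul, hη.pow_eq_one, one_pow, mul_one]
    exact Submodule.subset_span ⟨(⟨n % p ^ s, Nat.mod_lt n hq⟩, i), rfl⟩
  have hηΔ : ∀ δ ∈ Δ, η * δ ∈ Δ := fun δ => Submodule.mul_mem_span_of_forall_mul_mem <| by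
    rintro _ ⟨⟨n, i⟩, rfl⟩
    simpa [← mul_assoc, ← pow_succ'] using hgen (n + 1) i
  -- `β 0 / (1 - η)` is the fixed point of `h 0`.
  have hβc (i : Fin (r + 1)) : β i - (1 - η) * (β 0 / (1 - η)) ∈ Δ := by
    rw [mul_div_cancel₀ _ (sub_ne_zero.mpr hη1.symm)]
    simpa using hgen 0 i
  have hΓK : Γ ≤ rotationTranslationSubgroup η (β 0 / (1 - η)) Δ hq hη.pow_eq_one hηΔ := by
    rw [hΓ, Subgroup.closure_le]
    rintro _ ⟨i, rfl⟩
    exact mem_rotationTranslationSubgroup hq hη.pow_eq_one hηΔ (hh i) (hβc i)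
  have hdiv (i : Fin (r + 1)) : ∃ w ∈ Δ, β i - β 0 = (η - 1) * w := by
    obtain ⟨g, hgΓ, hg⟩ := hconj i 0
    exact exists_mem_sub_eq_mul_of_semiconj (hΓK hgΓ) (by simpa [hh] using hg) (hβc 0)
  have hinv : ∀ δ ∈ Δ, (η - 1)⁻¹ * δ ∈ Δ := fun δ => Submodule.mul_mem_span_of_forall_mul_mem <| by
    rintro _ ⟨⟨n, i⟩, rfl⟩
    obtain ⟨w, hw, hiw⟩ := hdiv i
    dsimp only
    rw [hiw, mul_left_comm, inv_mul_cancel_left₀ (sub_ne_zero.mpr hη1)]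
    exact pow_mul_mem_of_forall_mul_mem η Δ hηΔ n hw
  have hΔ : Δ = ⊥ := by
    by_contra hΔ
    exact hη.not_isIntegral_inv_sub_one hp hs <| isIntegral_of_smul_mem_submodule Δ hΔ
      (Submodule.fg_span (Set.finite_range _)) _ hinv
  intro i j
  have hi := hgen 0 i
  have hj := hgen 0 j
  rw [hΔ, Submodule.mem_bot, pow_zero, one_mul, sub_eq_zero] at hi hj
  rw [hi, hj]
end

section
/- Let p ∈ ℕ*, f(z) = z/(1−z^p)^{1/p}, f^{-1}(z) = z/(1+z^p)^{1/p}, and h(z) = e^{πi/p}z. Then f∘h = h∘f^{-1}, so f and f^{-1} are conjugate in Diff(ℂ,0), even though f has infinite order. -/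
open Filter Topology

/-!
The maps `φ_c(z) = z / (1 + c z^p)^{1/p}` form a one-parameter group of germs at `0`
(they are the flow of `-z^{p+1}/p · ∂_z`): `φ_a ∘ φ_b = φ_{a+b}`. Near `0` the numbers
`1 + c z^p` have positive real part, where the principal `p`-th root is multiplicative, so
the identity holds as germs. Hence `f = φ_{-1}` has inverse `φ_1` and `f^[n] = φ_{-n} ≠ id`,
and since `ζ^p = -1` for `ζ = e^{πi/p}`, multiplication by `ζ` conjugates `φ_c` to `φ_{-c}`.
-/

theorem Complex.mul_cpow_of_re_pos {x y : ℂ} (hx : 0 < x.re) (hy : 0 < y.re) (s : ℂ) :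
    (x * y) ^ s = x ^ s * y ^ s := by
  have hx0 : x ≠ 0 := fun h => by simp [h] at hx
  have hy0 : y ≠ 0 := fun h => by simp [h] at hy
  have hx' := abs_lt.mp (Complex.abs_arg_lt_pi_div_two_iff.mpr (Or.inl hx))
  have hy' := abs_lt.mp (Complex.abs_arg_lt_pi_div_two_iff.mpr (Or.inl hy))
  have hlog : Complex.log (x * y) = Complex.log x + Complex.log y :=
    Complex.log_mul hx0 hy0 ⟨by linarith, by linarith⟩
  rw [Complex.cpow_def_of_ne_zero (mul_ne_zero hx0 hy0), Complex.cpow_def_of_ne_zero hx0,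
    Complex.cpow_def_of_ne_zero hy0, hlog, add_mul, Complex.exp_add]

noncomputable def powFlow (p : ℕ) (c z : ℂ) : ℂ :=
  z / (1 + c * z ^ p) ^ (p : ℂ)⁻¹

section

variable {p : ℕ}

@[simp]
theorem powFlow_zero : powFlow p 0 = id := by
  ext z; simp [powFlow]

theorem pow_powFlow (hp : p ≠ 0) (c z : ℂ) :
    powFlow p c z ^ p = z ^ p / (1 + c * z ^ p) := by
  rw [powFlow, div_pow, Complex.cpow_nat_inv_pow _ hp]

theorem powFlow_comp_powFlow (hp : p ≠ 0) (a b : ℂ) :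
    powFlow p a ∘ powFlow p b =ᶠ[𝓝 0] powFlow p (a + b) := by
  have hu : ∀ᶠ z : ℂ in 𝓝 0, 0 < (1 + b * z ^ p).re :=
    continuousAt_const.eventually_lt (by fun_prop) (by simp [hp])
  have hw : ∀ᶠ z : ℂ in 𝓝 0, 0 < (1 + a * (z ^ p / (1 + b * z ^ p))).re :=
    continuousAt_const.eventually_lt (by fun_prop (disch := simp [hp])) (by simp [hp])
  filter_upwards [hu, hw] with z hu hw
  have hu0 : 1 + b * z ^ p ≠ 0 := fun h => by simp [h] at hu
  have hv : 1 + (a + b) * z ^ p = (1 + b * z ^ p) * (1 + a * (z ^ p / (1 + b * z ^ p))) := by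
    field_simp; ring
  simp only [Function.comp_apply]
  rw [powFlow, pow_powFlow hp, powFlow, powFlow, hv, Complex.mul_cpow_of_re_pos hu hw, div_div]

theorem iterate_powFlow (hp : p ≠ 0) (c : ℂ) (n : ℕ) :
    (powFlow p c)^[n] =ᶠ[𝓝 0] powFlow p (n * c) := by
  induction n with
  | zero => simp
  | succ n ih =>
    rw [Function.iterate_succ']
    refine (ih.fun_comp _).trans ?_
    simpa [add_mul, add_comm] using powFlow_comp_powFlow hp c (n * c)

theorem not_powFlow_eventuallyEq_id (hp : p ≠ 0) {c : ℂ} (hc : c ≠ 0) :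
    ¬ powFlow p c =ᶠ[𝓝 0] id := by
  intro h
  obtain ⟨z, hz, hz0⟩ :=
    ((eventually_nhdsWithin_of_eventually_nhds h).and (self_mem_nhdsWithin (s := {0}ᶜ))).exists
  have hroot : (1 + c * z ^ p) ^ (p : ℂ)⁻¹ = 1 := by
    rwa [id, powFlow, div_eq_mul_inv, mul_eq_left₀ hz0, inv_eq_one] at hz
  have : 1 + c * z ^ p = 1 := by
    rw [← Complex.cpow_nat_inv_pow (1 + c * z ^ p) hp, hroot, one_pow]
  simp [hc, hp] at this
  exact hz0 this

theorem powFlow_mul_of_pow_eq_neg_one (c : ℂ) {ζ : ℂ} (hζ : ζ ^ p = -1) (z : ℂ) :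
    powFlow p c (ζ * z) = ζ * powFlow p (-c) z := by
  simp only [powFlow, mul_pow, hζ, mul_div_assoc]
  ring_nf

theorem exp_pi_mul_I_div_natCast_pow (hp : p ≠ 0) :
    Complex.exp (Real.pi * Complex.I / p) ^ p = -1 := by
  rw [← Complex.exp_nat_mul, mul_div_cancel₀ _ (Nat.cast_ne_zero.mpr hp), Complex.exp_pi_mul_I]

end

/-- With `f(z) = z/(1-z^p)^{1/p}`, `f⁻¹(z) = z/(1+z^p)^{1/p}`
(principal branches) and `h(z) = e^{πi/p} z`, one has `f∘h = h∘f⁻¹` as germs at `0`: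
`f` and `f⁻¹` are conjugate in `Diff(ℂ,0)`, even though `f` has infinite order. -/
theorem stmt14 (p : ℕ) (hp : 0 < p) (f finv h : ℂ → ℂ)
    (hf : ∀ z, f z = z / (1 - z ^ p) ^ ((p : ℂ)⁻¹))
    (hfinv : ∀ z, finv z = z / (1 + z ^ p) ^ ((p : ℂ)⁻¹))
    (hh : ∀ z, h z = Complex.exp (Real.pi * Complex.I / p) * z) :
    ((fun z => f (finv z)) =ᶠ[nhds (0 : ℂ)] id) ∧
    ((fun z => finv (f z)) =ᶠ[nhds (0 : ℂ)] id) ∧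
    ((fun z => f (h z)) =ᶠ[nhds (0 : ℂ)] fun z => h (finv z)) ∧
    ∀ n : ℕ, 1 ≤ n → ¬ (f^[n] =ᶠ[nhds (0 : ℂ)] id) := by
  obtain rfl : f = powFlow p (-1) := funext fun z => by simp [hf, powFlow, sub_eq_add_neg]
  obtain rfl : finv = powFlow p 1 := funext fun z => by simp [hfinv, powFlow]
  have hp0 := hp.ne'
  refine ⟨?_, ?_, ?_, fun n hn hid => ?_⟩
  · show powFlow p (-1) ∘ powFlow p 1 =ᶠ[𝓝 0] id
    simpa using powFlow_comp_powFlow hp0 (-1) 1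
  · show powFlow p 1 ∘ powFlow p (-1) =ᶠ[𝓝 0] id
    simpa using powFlow_comp_powFlow hp0 1 (-1)
  · refine Eventually.of_forall fun z => ?_
    simp only [hh, powFlow_mul_of_pow_eq_neg_one _ (exp_pi_mul_I_div_natCast_pow hp0), neg_neg]
  · have hc : (n : ℂ) * -1 ≠ 0 := by simpa using Nat.one_le_iff_ne_zero.mp hn
    exact not_powFlow_eventuallyEq_id hp0 hc ((iterate_powFlow hp0 _ n).symm.trans hid)
end
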